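/- Let E : ℝⁿ → ℝ be twice continuously differentiable with gradient g, and let U ⊆ ℝⁿ be an open corridor for E. If θ ∈ U and the segment {θ - s • g(θ) : s ∈ [0, t]} lies in U, then the loss decreases linearly along the line of steepest descent: E(θ - t • g(θ)) = E(θ) - t‖g(θ)‖². -/

import Mathlib

/-- An open set `U ⊆ ℝⁿ` is a *corridor* for `E` if every solution of the gradient flow
`θ'(t) = -∇E(θ(t))` whose image lies in `U` is a straight line traveled at constant speed,
i.e. satisfies `θ(t) = θ(a) + (t - a) • v` for some fixed vector `v`. -/
def IsCorridor {n : ℕ} (E : EuclideanSpace ℝ (Fin n) → ℝ)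
    (U : Set (EuclideanSpace ℝ (Fin n))) : Prop :=
  ∀ (a b : ℝ), a ≤ b → ∀ θ : ℝ → EuclideanSpace ℝ (Fin n),
    (∀ t ∈ Set.Icc a b, HasDerivAt θ (-(gradient E (θ t))) t) →
    (∀ t ∈ Set.Icc a b, θ t ∈ U) →
    ∃ v : EuclideanSpace ℝ (Fin n), ∀ t ∈ Set.Icc a b, θ t = θ a + (t - a) • v

/-!
Through every point `x` of a corridor the gradient flow is, for a short time, a straight line
`u ↦ x + u • v` (Picard–Lindelöf gives the flow, the corridor property makes it straight).
Its velocity `-∇E` is then constant along the line and equal to `-∇E(x)` at `u = 0`, so `∇E` is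
constant on a neighbourhood of `x` in the steepest-descent line through `x`. A closed-and-open
argument on `[0, t]` propagates `∇E(θ - s • ∇E(θ)) = ∇E(θ)` along the whole segment, and
integrating the derivative `-‖∇E(θ)‖²` of `s ↦ E(θ - s • ∇E(θ))` gives the formula.
-/

open Set Filter Topology InnerProductSpace

section Gradient

variable {F : Type*} [NormedAddCommGroup F] [InnerProductSpace ℝ F] [CompleteSpace F]

theorem ContDiff.gradient {f : F → ℝ} {m n : WithTop ℕ∞} (hf : ContDiff ℝ n f)
    (hmn : m + 1 ≤ n) : ContDiff ℝ m (gradient f) :=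
  (toDual ℝ F).symm.contDiff.comp (hf.fderiv_right hmn)

theorem apply_sub_smul_eq_of_hasGradientAt {f : F → ℝ} {x v w : F} {t : ℝ}
    (hf : ∀ s ∈ uIcc 0 t, HasGradientAt f w (x - s • v)) :
    f (x - t • v) = f x - t * ⟪w, v⟫_ℝ := by
  have hderiv : ∀ s ∈ uIcc 0 t, HasDerivAt (fun s : ℝ => f (x - s • v)) (-⟪w, v⟫_ℝ) s := by
    intro s hs
    have hline : HasDerivAt (fun s : ℝ => x - s • v) (-v) s := by
      simpa using ((hasDerivAt_id s).smul_const v).const_sub x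
    have := (hf s hs).hasFDerivAt.comp_hasDerivAt s hline
    rwa [toDual_apply_apply, inner_neg_right] at this
  have := intervalIntegral.integral_eq_sub_of_hasDerivAt hderiv intervalIntegrable_const
  simp only [intervalIntegral.integral_const, sub_zero, smul_eq_mul, zero_smul] at this
  linarith

end Gradient

theorem HasDerivAt.eq_of_eventuallyEq_line {F : Type*} [NormedAddCommGroup F] [NormedSpace ℝ F]
    {f : ℝ → F} {f' y v : F} {u : ℝ} (hf : HasDerivAt f f' u)
    (hline : ∀ᶠ s in 𝓝 u, f s = y + s • v) : f' = v :=
  hf.unique <| by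
    simpa using ((hasDerivAt_id u).smul_const v).const_add y |>.congr_of_eventuallyEq hline

theorem ContDiffAt.exists_eventually_hasDerivAt_mem {F : Type*} [NormedAddCommGroup F]
    [NormedSpace ℝ F] [CompleteSpace F] {G : F → F} {x : F} {U : Set F}
    (hG : ContDiffAt ℝ 1 G x) (hU : U ∈ 𝓝 x) :
    ∃ α : ℝ → F, α 0 = x ∧ ∀ᶠ u in 𝓝 0, HasDerivAt α (G (α u)) u ∧ α u ∈ U := by
  obtain ⟨α, hα0, ε, hε, hα⟩ :=
    hG.exists_forall_mem_closedBall_exists_eq_forall_mem_Ioo_hasDerivAt₀ 0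
  have hflow : ∀ᶠ u in 𝓝 (0 : ℝ), HasDerivAt α (G (α u)) u :=
    eventually_of_mem (Ioo_mem_nhds (by linarith) (by linarith)) hα
  have hcont : ContinuousAt α 0 := (hflow.self_of_nhds).continuousAt
  exact ⟨α, hα0, hflow.and (hcont.preimage_mem_nhds (hα0 ▸ hU))⟩

namespace IsCorridor

variable {n : ℕ} {E : EuclideanSpace ℝ (Fin n) → ℝ} {U : Set (EuclideanSpace ℝ (Fin n))}

theorem eventually_gradient_eq (hcor : IsCorridor E U) {x : EuclideanSpace ℝ (Fin n)}
    (hg : ContDiffAt ℝ 1 (gradient E) x) (hU : U ∈ 𝓝 x) :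
    ∀ᶠ s in 𝓝 (0 : ℝ), gradient E (x - s • gradient E x) = gradient E x := by
  obtain ⟨α, hα0, hα⟩ := hg.neg.exists_eventually_hasDerivAt_mem hU
  obtain ⟨ε, hε, hball⟩ := Metric.eventually_nhds_iff.mp hα
  have hflow : ∀ u ∈ Icc (-(ε / 2)) (ε / 2), HasDerivAt α (-gradient E (α u)) u ∧ α u ∈ U :=
    fun u hu => hball <| by
      rw [Real.dist_eq, sub_zero]
      exact (abs_le.mpr hu).trans_lt (by linarith)
  obtain ⟨v, hv⟩ :=
    hcor _ _ (by linarith) α (fun u hu => (hflow u hu).1) (fun u hu => (hflow u hu).2)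
  have hline : ∀ u ∈ Icc (-(ε / 2)) (ε / 2), α u = x + u • v := by
    intro u hu
    rw [hv u hu, ← hα0, hv 0 ⟨by linarith, by linarith⟩]
    module
  have hvel : ∀ u ∈ Ioo (-(ε / 2)) (ε / 2), -gradient E (α u) = v := fun u hu =>
    (hflow u (Ioo_subset_Icc_self hu)).1.eq_of_eventuallyEq_line <|
      eventually_of_mem (Ioo_mem_nhds hu.1 hu.2) fun s hs => hline s (Ioo_subset_Icc_self hs)
  have hIoo : Ioo (-(ε / 2)) (ε / 2) ∈ 𝓝 (0 : ℝ) := Ioo_mem_nhds (by linarith) (by linarith)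
  have hv0 : v = -gradient E x := by rw [← hvel 0 (mem_of_mem_nhds hIoo), hα0]
  filter_upwards [hIoo] with u hu
  have hαu : x - u • gradient E x = α u := by
    rw [hline u (Ioo_subset_Icc_self hu), hv0]
    module
  rw [hαu, ← neg_inj, hvel u hu, hv0]

theorem gradient_eq_of_segment (hcor : IsCorridor E U) (hg : ContDiff ℝ 1 (gradient E))
    (hU : IsOpen U) {θ : EuclideanSpace ℝ (Fin n)} {t : ℝ}
    (hseg : ∀ s ∈ Icc 0 t, θ - s • gradient E θ ∈ U) :
    ∀ s ∈ Icc 0 t, gradient E (θ - s • gradient E θ) = gradient E θ := by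
  set g := gradient E θ
  have hclosed : IsClosed ({s : ℝ | gradient E (θ - s • g) = g} ∩ Icc 0 t) :=
    (isClosed_eq (by fun_prop) continuous_const).inter isClosed_Icc
  refine hclosed.Icc_subset_of_forall_mem_nhdsWithin (by simp [g]) ?_
  rintro s ⟨hs, hs0, hst⟩
  have hloc := hcor.eventually_gradient_eq hg.contDiffAt (hU.mem_nhds (hseg s ⟨hs0, hst.le⟩))
  rw [show gradient E (θ - s • g) = g from hs] at hloc
  refine mem_nhdsWithin_of_mem_nhds ?_
  filter_upwards [(continuous_sub_right s).tendsto' s 0 (sub_self s) |>.eventually hloc] with r hr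
  rwa [show θ - r • g = θ - s • g - (r - s) • g by module]

end IsCorridor

theorem loss_linear_on_steepest_descent_line {n : ℕ}
    (E : EuclideanSpace ℝ (Fin n) → ℝ) (hE : ContDiff ℝ 2 E)
    (U : Set (EuclideanSpace ℝ (Fin n))) (hU : IsOpen U) (hcor : IsCorridor E U)
    (θ : EuclideanSpace ℝ (Fin n))
    (t : ℝ) (ht : 0 ≤ t)
    (hseg : ∀ s ∈ Set.Icc (0 : ℝ) t, θ - s • gradient E θ ∈ U) :
    E (θ - t • gradient E θ) = E θ - t * ‖gradient E θ‖ ^ 2 := by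
  have hconst := hcor.gradient_eq_of_segment (hE.gradient (by norm_num)) hU hseg
  rw [apply_sub_smul_eq_of_hasGradientAt (f := E) (w := gradient E θ), real_inner_self_eq_norm_sq]
  intro s hs
  have hEs := (hE.differentiable (by norm_num) (θ - s • gradient E θ)).hasGradientAt
  rwa [hconst s (uIcc_of_le ht ▸ hs)] at hEs
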